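/- arXiv:1305.0257 — 7 statements merged into one kernel-verified Lean document; each statement's English description precedes it below -/
import Mathlib

section
/- The set S = span{ |j⟩|k+1⟩ − |j+1⟩|k⟩ : 0 ≤ j ≤ m−2, 0 ≤ k ≤ n−2 } is a linear subspace of ℂ^m ⊗ ℂ^n of dimension (m−1)(n−1). -/
open Matrix Complex Finset

/-- The subspace `S = span{ |j⟩|k+1⟩ − |j+1⟩|k⟩ }` of `ℂ^m ⊗ ℂ^n ≅ ℂ^(mn)`. -/
noncomputable def entSub (m n : ℕ) : Submodule ℂ (Fin m × Fin n → ℂ) :=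
  Submodule.span ℂ {x | ∃ (j k : ℕ) (hj : j + 1 < m) (hk : k + 1 < n),
    x = Pi.single ((⟨j, by omega⟩ : Fin m), (⟨k + 1, hk⟩ : Fin n)) (1 : ℂ)
      - Pi.single ((⟨j + 1, hj⟩ : Fin m), (⟨k, by omega⟩ : Fin n)) (1 : ℂ)}

/-
The generators are linearly independent, which gives the dimension count. Independence is
witnessed by an explicit left inverse: the coordinate at `(p, q)` is minus the sum of the entries
on the antidiagonal `a + b = p + q + 1` lying strictly below row `p`. On the generator
`|j⟩|k+1⟩ − |j+1⟩|k⟩`, which lives on the antidiagonal `j + k + 1`, this telescopes to `[j = p]`,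
and on that antidiagonal `j = p` forces `k = q`.
-/

variable (R : Type*) [CommRing R]

noncomputable def entGen (m n : ℕ) (p : Fin (m - 1) × Fin (n - 1)) : Fin m × Fin n → R :=
  Pi.single ((⟨p.1, by omega⟩ : Fin m), (⟨p.2 + 1, by omega⟩ : Fin n)) 1
    - Pi.single ((⟨p.1 + 1, by omega⟩ : Fin m), (⟨p.2, by omega⟩ : Fin n)) 1

noncomputable def entCoord (m n : ℕ) :
    (Fin m × Fin n → R) →ₗ[R] (Fin (m - 1) × Fin (n - 1) → R) :=
  mulVecLin (Matrix.of fun pq ab =>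
    if (pq.1 : ℕ) < ab.1 ∧ (pq.1 : ℕ) + pq.2 + 1 = ab.1 + ab.2 then (-1 : R) else 0)

lemma entCoord_entGen (m n : ℕ) (p : Fin (m - 1) × Fin (n - 1)) :
    entCoord R m n (entGen R m n p) = Pi.single p 1 := by
  obtain ⟨⟨j, hj⟩, ⟨k, hk⟩⟩ := p
  ext ⟨⟨a, ha⟩, ⟨b, hb⟩⟩
  simp only [entCoord, entGen, map_sub, mulVecLin_apply, mulVec_single,
    Pi.sub_apply, Pi.single_apply, Prod.ext_iff, Fin.ext_iff]
  split_ifs <;> norm_num <;> split_ifs <;> norm_num <;> omega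

lemma linearIndependent_entGen (m n : ℕ) : LinearIndependent R (entGen R m n) := by
  refine LinearIndependent.of_comp (entCoord R m n) ?_
  convert (Pi.basisFun R (Fin (m - 1) × Fin (n - 1))).linearIndependent using 1
  ext1 p
  simp only [Function.comp_apply, entCoord_entGen, Pi.basisFun_apply]

lemma entSub_eq_span_range_entGen (m n : ℕ) :
    entSub m n = Submodule.span ℂ (Set.range (entGen ℂ m n)) := by
  unfold entSub
  congr 1
  ext x
  constructor
  · rintro ⟨j, k, hj, hk, rfl⟩
    exact ⟨(⟨j, by omega⟩, ⟨k, by omega⟩), rfl⟩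
  · rintro ⟨⟨⟨j, hj⟩, ⟨k, hk⟩⟩, rfl⟩
    exact ⟨j, k, by omega, by omega, rfl⟩

theorem stmt_0_general (m n : ℕ) :
    Module.finrank ℂ (entSub m n) = (m - 1) * (n - 1) := by
  rw [entSub_eq_span_range_entGen, finrank_span_eq_card (linearIndependent_entGen ℂ m n),
    Fintype.card_prod, Fintype.card_fin, Fintype.card_fin]

theorem stmt_0 (m n : ℕ) (hm : 1 ≤ m) (hn : 1 ≤ n) :
    Module.finrank ℂ (entSub m n) = (m - 1) * (n - 1) :=
  stmt_0_general m n
end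

section
/- Every nonzero vector in the subspace S = span{ |j⟩|k+1⟩ − |j+1⟩|k⟩ : 0 ≤ j ≤ m−2, 0 ≤ k ≤ n−2 } of ℂ^m ⊗ ℂ^n is entangled, i.e., cannot be written as a tensor product v ⊗ w with v ∈ ℂ^m and w ∈ ℂ^n. -/
/-!
Send a matrix `x` on `Fin m × Fin n` to the polynomial `∑ x j k X^(j+k)`. Each generator
`|j⟩|k+1⟩ - |j+1⟩|k⟩` of `S` goes to `X^(j+k+1) - X^(j+1+k) = 0`, so `S` lies in the kernel,
while the product vector `a ⊗ b` goes to the product of the polynomials with coefficient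
vectors `a` and `b`. As `ℂ[X]` is a domain, one of the factors, hence `a ⊗ b`, vanishes.
-/

open Matrix Complex Finset

open Polynomial

section AntidiagonalPoly

variable {R : Type*} [CommSemiring R] {m n : ℕ}

noncomputable def antidiagonalPoly (m n : ℕ) : (Fin m × Fin n → R) →ₗ[R] R[X] :=
  Fintype.linearCombination R fun p => X ^ ((p.1 : ℕ) + p.2)

theorem antidiagonalPoly_single (p : Fin m × Fin n) (r : R) :
    antidiagonalPoly m n (Pi.single p r) = monomial ((p.1 : ℕ) + p.2) r := by
  rw [antidiagonalPoly, Fintype.linearCombination_apply_single, smul_X_eq_monomial]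

theorem antidiagonalPoly_mul [DecidableEq R] (a : Fin m → R) (b : Fin n → R) :
    antidiagonalPoly m n (fun p => a p.1 * b p.2) = ofFn m a * ofFn n b := by
  simp only [antidiagonalPoly, Fintype.linearCombination_apply, smul_X_eq_monomial,
    ofFn_eq_sum_monomial, Finset.sum_mul_sum, monomial_mul_monomial, Fintype.sum_prod_type]

end AntidiagonalPoly

theorem entSub_le_ker_antidiagonalPoly (m n : ℕ) :
    entSub m n ≤ LinearMap.ker (antidiagonalPoly m n) := by
  refine Submodule.span_le.mpr ?_
  rintro _ ⟨j, k, hj, hk, rfl⟩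
  simp only [SetLike.mem_coe, LinearMap.mem_ker, map_sub, antidiagonalPoly_single]
  rw [add_right_comm, add_assoc, sub_self]

theorem stmt_3_general (m n : ℕ)
    (v : Fin m × Fin n → ℂ) (hv : v ∈ entSub m n) (hv0 : v ≠ 0) :
    ¬ ∃ (a : Fin m → ℂ) (b : Fin n → ℂ), v = fun p => a p.1 * b p.2 := by
  rintro ⟨a, b, rfl⟩
  have hprod : ofFn m a * ofFn n b = 0 := by
    rw [← antidiagonalPoly_mul]
    exact entSub_le_ker_antidiagonalPoly m n hv
  apply hv0
  rcases mul_eq_zero.mp hprod with ha | hb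
  · obtain rfl : a = 0 := injective_ofFn m (ha.trans (map_zero _).symm)
    ext; simp
  · obtain rfl : b = 0 := injective_ofFn n (hb.trans (map_zero _).symm)
    ext; simp

theorem stmt_3 (m n : ℕ) (hm : 2 ≤ m) (hn : 2 ≤ n)
    (v : Fin m × Fin n → ℂ) (hv : v ∈ entSub m n) (hv0 : v ≠ 0) :
    ¬ ∃ (a : Fin m → ℂ) (b : Fin n → ℂ), v = fun p => a p.1 * b p.2 :=
  stmt_3_general m n v hv hv0
end

section
/- Let {A_i} be a finite family of n×m complex matrices, each with all anti-diagonals summing to zero, not all zero, and let p_i > 0. Then there exist indices j₀ < j₁ (columns) and k₀ < k₁ (rows) such that (A_i)_{k₀,j₀} = 0 for all i and Σ_i p_i · conj((A_i)_{k₁,j₀}) · (A_i)_{k₀,j₁} ≠ 0. -/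
open Matrix Complex Finset

/-!
Let `s` be the first anti-diagonal on which some `A i` has a nonzero entry `P`, so that all
entries strictly above it vanish. Consider the weighted Gram form
`G(P, Q) = ∑ i, p i * conj (A i P) * A i Q` on positions. Since every `A i` sums to zero along
the anti-diagonal `s`, so does each row `Q ↦ G(P, Q)` restricted to it; as `G(P, P) > 0`, some
other position `Q` on that anti-diagonal has `G(P, Q) ≠ 0`. Because `G` is Hermitian we may take
`Q` in a higher row than `P`; then `Q` lies in a later column, and the entry in `Q`'s row and
`P`'s column lies above the anti-diagonal `s`, hence vanishes.
-/

section WeightedGram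

variable {ι α : Type*} [Fintype ι] (p : ι → ℝ) (v : ι → α → ℂ)

def weightedGram (P Q : α) : ℂ :=
  ∑ i, (p i : ℂ) * starRingEnd ℂ (v i P) * v i Q

lemma weightedGram_swap (P Q : α) :
    weightedGram p v Q P = starRingEnd ℂ (weightedGram p v P Q) := by
  simp only [weightedGram, map_sum, map_mul, conj_conj, conj_ofReal]
  exact sum_congr rfl fun i _ => by ring

lemma weightedGram_self_ne_zero (hp : ∀ i, 0 < p i) {P : α} (hP : ∃ i, v i P ≠ 0) :
    weightedGram p v P P ≠ 0 := by
  obtain ⟨i₀, hi₀⟩ := hP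
  have hreal : weightedGram p v P P = ((∑ i, p i * normSq (v i P) : ℝ) : ℂ) := by
    push_cast [weightedGram]
    exact sum_congr rfl fun i _ => by rw [normSq_eq_conj_mul_self]; ring
  rw [hreal, ofReal_ne_zero]
  refine (sum_pos' (fun i _ => mul_nonneg (hp i).le (normSq_nonneg _)) ⟨i₀, mem_univ _, ?_⟩).ne'
  exact mul_pos (hp i₀) (normSq_pos.2 hi₀)

lemma sum_weightedGram_eq_zero {T : Finset α} (hv : ∀ i, ∑ Q ∈ T, v i Q = 0) (P : α) :
    ∑ Q ∈ T, weightedGram p v P Q = 0 := by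
  simp only [weightedGram]
  rw [sum_comm]
  simp only [← mul_sum, hv, mul_zero, sum_const_zero]

lemma exists_ne_weightedGram_ne_zero (hp : ∀ i, 0 < p i) {T : Finset α}
    (hv : ∀ i, ∑ Q ∈ T, v i Q = 0) {P : α} (hPT : P ∈ T) (hP : ∃ i, v i P ≠ 0) :
    ∃ Q ∈ T, Q ≠ P ∧ weightedGram p v P Q ≠ 0 := by
  by_contra! h
  have hdiag := sum_eq_single_of_mem P hPT h
  rw [sum_weightedGram_eq_zero p v hv] at hdiag
  exact weightedGram_self_ne_zero p v hp hP hdiag.symm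

end WeightedGram

section Antidiag

variable {n m : ℕ}

def antidiag (n m s : ℕ) : Finset (Fin n × Fin m) :=
  univ.filter fun P => (P.1 : ℕ) + P.2 = s

lemma mem_antidiag {s : ℕ} {P : Fin n × Fin m} : P ∈ antidiag n m s ↔ (P.1 : ℕ) + P.2 = s := by
  simp [antidiag]

lemma sum_antidiag_eq {R : Type*} [AddCommMonoid R] (B : Matrix (Fin n) (Fin m) R) (s : ℕ) :
    ∑ P ∈ antidiag n m s, B P.1 P.2 =
      ∑ j : Fin m, ∑ k : Fin n, if (j : ℕ) + k = s then B k j else 0 := by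
  rw [antidiag, sum_filter, ← univ_product_univ, sum_product, sum_comm]
  simp only [add_comm]

lemma exists_first_nonzero_antidiag {ι R : Type*} [Zero R] (A : ι → Matrix (Fin n) (Fin m) R)
    (hnz : ∃ i, A i ≠ 0) :
    ∃ s, ∃ P ∈ antidiag n m s, (∃ i, A i P.1 P.2 ≠ 0) ∧
      ∀ i (k : Fin n) (j : Fin m), (k : ℕ) + j < s → A i k j = 0 := by
  classical
  have hex : ∃ s, ∃ P ∈ antidiag n m s, ∃ i, A i P.1 P.2 ≠ 0 := by
    obtain ⟨i, hi⟩ := hnz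
    obtain ⟨k, j, hkj⟩ : ∃ k j, A i k j ≠ 0 := by simpa [← Matrix.ext_iff] using hi
    exact ⟨_, (k, j), mem_antidiag.2 rfl, i, hkj⟩
  obtain ⟨P, hP, hPnz⟩ := Nat.find_spec hex
  refine ⟨_, P, hP, hPnz, fun i k j hlt => ?_⟩
  by_contra hne
  exact Nat.find_min hex hlt ⟨(k, j), mem_antidiag.2 rfl, i, hne⟩

end Antidiag

theorem stmt_4 (m n : ℕ) {ι : Type*} [Fintype ι]
    (A : ι → Matrix (Fin n) (Fin m) ℂ) (p : ι → ℝ)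
    (hp : ∀ i, 0 < p i)
    (hA : ∀ i, ∀ s : ℕ, ∑ j : Fin m, ∑ k : Fin n,
      (if (j : ℕ) + (k : ℕ) = s then A i k j else 0) = 0)
    (hnz : ∃ i, A i ≠ 0) :
    ∃ (j₀ j₁ : Fin m) (k₀ k₁ : Fin n), j₀ < j₁ ∧ k₀ < k₁ ∧
      (∀ i, A i k₀ j₀ = 0) ∧
      ∑ i, (p i : ℂ) * (starRingEnd ℂ) (A i k₁ j₀) * A i k₀ j₁ ≠ 0 := by
  obtain ⟨s, P, hPs, hPnz, hbelow⟩ := exists_first_nonzero_antidiag A hnz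
  obtain ⟨Q, hQs, hQP, hPQ⟩ := exists_ne_weightedGram_ne_zero p (fun i Q => A i Q.1 Q.2) hp
    (fun i => (sum_antidiag_eq (A i) s).trans (hA i s)) hPs hPnz
  rw [mem_antidiag] at hPs hQs
  clear hPnz
  wlog hlt : Q.1 < P.1 generalizing P Q
  · have hne : Q.1 ≠ P.1 := fun h => hQP (Prod.ext h (Fin.ext (by omega)))
    refine this (P := Q) (Q := P) hQs hPs hQP.symm ?_ (lt_of_le_of_ne (not_lt.1 hlt) hne.symm)
    rwa [weightedGram_swap, map_ne_zero]
  refine ⟨P.2, Q.2, Q.1, P.1, ?_, hlt, fun i => hbelow i _ _ ?_, hPQ⟩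
  all_goals omega
end

section
/- Let ρ = Σ_i p_i |v_i⟩⟨v_i| ∈ M_m(ℂ) ⊗ M_n(ℂ) with p_i > 0, Σ_i p_i = 1, and each |v_i⟩ a unit vector. If there exist indices j₀ ≠ j₁ ∈ {0,…,m−1} and k₀ ≠ k₁ ∈ {0,…,n−1} such that, writing v_i in the standard tensor basis, (v_i)_{j₀,k₀} = 0 for all i and Σ_i p_i · conj((v_i)_{j₁,k₀}) · (v_i)_{j₀,k₁} ≠ 0, then the partial transpose ρ^Γ is not positive semidefinite. -/
/-! The diagonal entry of `ρ^Γ` at `(j₀, k₀)` vanishes, and a positive semidefinite matrix with a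
zero diagonal entry has the whole corresponding row zero; but the entry of `ρ^Γ` at
`((j₀, k₀), (j₁, k₁))` is the sum assumed nonzero. -/

open Matrix Complex Finset
open scoped ComplexOrder

/-- Partial transpose on the second factor: `(ρ^Γ)_{(j,k),(j',k')} = ρ_{(j,k'),(j',k)}`. -/
def ptranspose {m n : ℕ} (ρ : Matrix (Fin m × Fin n) (Fin m × Fin n) ℂ) :
    Matrix (Fin m × Fin n) (Fin m × Fin n) ℂ :=
  fun a b => ρ (a.1, b.2) (b.1, a.2)

/-- The outer product `|v⟩⟨v|`. -/
def outer {d : Type*} (v : d → ℂ) : Matrix d d ℂ :=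
  fun a b => v a * (starRingEnd ℂ) (v b)

theorem Matrix.PosSemidef.apply_eq_zero_of_diag_eq_zero {𝕜 ι : Type*} [RCLike 𝕜] [Fintype ι]
    {A : Matrix ι ι 𝕜} (hA : A.PosSemidef) {i : ι} (hi : A i i = 0) (j : ι) :
    A i j = 0 := by
  classical
  have hcol : A *ᵥ Pi.single i 1 = 0 :=
    (hA.dotProduct_mulVec_zero_iff _).mp (by simp [hi])
  have hji : A j i = 0 := by simpa using congrFun hcol j
  rw [← hA.isHermitian.apply i j, hji, star_zero]

theorem ptranspose_sum_smul_outer_apply {m n : ℕ} {ι : Type*} [Fintype ι] (c : ι → ℂ)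
    (v : ι → Fin m × Fin n → ℂ) (a b : Fin m × Fin n) :
    ptranspose (∑ i, c i • outer (v i)) a b
      = ∑ i, c i * (v i (a.1, b.2) * starRingEnd ℂ (v i (b.1, a.2))) := by
  simp [ptranspose, outer, Matrix.sum_apply]

theorem stmt_5_general (m n : ℕ) {ι : Type*} [Fintype ι]
    (p : ι → ℝ) (v : ι → Fin m × Fin n → ℂ)
    (j₀ j₁ : Fin m) (k₀ k₁ : Fin n)
    (hzero : ∀ i, v i (j₀, k₀) = 0)
    (hsum : ∑ i, (p i : ℂ) * (starRingEnd ℂ) (v i (j₁, k₀)) * v i (j₀, k₁) ≠ 0) :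
    ¬ (ptranspose (∑ i, (p i : ℂ) • outer (v i))).PosSemidef := by
  intro hpsd
  have hdiag : ptranspose (∑ i, (p i : ℂ) • outer (v i)) (j₀, k₀) (j₀, k₀) = 0 := by
    rw [ptranspose_sum_smul_outer_apply]
    simp [hzero]
  have hoff := hpsd.apply_eq_zero_of_diag_eq_zero hdiag (j₁, k₁)
  rw [ptranspose_sum_smul_outer_apply] at hoff
  refine hsum (Eq.trans (Finset.sum_congr rfl fun i _ => ?_) hoff)
  ring

theorem stmt_5 (m n : ℕ) {ι : Type*} [Fintype ι]
    (p : ι → ℝ) (v : ι → Fin m × Fin n → ℂ)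
    (hp : ∀ i, 0 < p i) (hp1 : ∑ i, p i = 1)
    (hunit : ∀ i, ∑ x, Complex.normSq (v i x) = 1)
    (j₀ j₁ : Fin m) (k₀ k₁ : Fin n) (hj : j₀ ≠ j₁) (hk : k₀ ≠ k₁)
    (hzero : ∀ i, v i (j₀, k₀) = 0)
    (hsum : ∑ i, (p i : ℂ) * (starRingEnd ℂ) (v i (j₁, k₀)) * v i (j₀, k₁) ≠ 0) :
    ¬ (ptranspose (∑ i, (p i : ℂ) • outer (v i))).PosSemidef :=
  stmt_5_general m n p v j₀ j₁ k₀ k₁ hzero hsum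
end

section
/- Every state ρ ∈ M_m(ℂ) ⊗ M_n(ℂ) whose range is contained in the subspace S = span{ |j⟩|k+1⟩ − |j+1⟩|k⟩ : 0 ≤ j ≤ m−2, 0 ≤ k ≤ n−2 } is entangled (not separable). -/
open Matrix Complex Finset Kronecker
open scoped ComplexOrder

/-- Separability of a bipartite state: a convex combination of pure product states. -/
def Separable {m n : ℕ} (ρ : Matrix (Fin m × Fin n) (Fin m × Fin n) ℂ) : Prop :=
  ∃ (k : ℕ) (p : Fin k → ℝ) (x : Fin k → Fin m → ℂ) (y : Fin k → Fin n → ℂ),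
    (∀ i, 0 ≤ p i) ∧ ∑ i, p i = 1 ∧
    (∀ i, ∑ a, Complex.normSq (x i a) = 1) ∧
    (∀ i, ∑ b, Complex.normSq (y i b) = 1) ∧
    ρ = ∑ i, (p i : ℂ) • (outer (x i) ⊗ₖ outer (y i))

/-! Every generator `|j⟩|k+1⟩ - |j+1⟩|k⟩` of `S` is orthogonal to the real vector `u_s` whose
entries are `1` on the anti-diagonal `j + k = s` and `0` elsewhere, so a state `ρ` supported on
`S` has `⟨u_s, ρ u_s⟩ = 0`. If `ρ = ∑ pᵢ |xᵢ ⊗ yᵢ⟩⟨xᵢ ⊗ yᵢ|`, then every product vector of positive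
weight is orthogonal to all `u_s`; but `⟨u_s, x ⊗ y⟩` is the `s`-th coefficient of the product of
the polynomials `∑ xₐ tᵃ` and `∑ y_b tᵇ`, which cannot vanish identically for unit vectors. -/

def antidiagVec (R : Type*) [Zero R] [One R] (m n s : ℕ) : Fin m × Fin n → R :=
  fun q => if (q.1 : ℕ) + q.2 = s then 1 else 0

def kronVec {R α β : Type*} [Mul R] (x : α → R) (y : β → R) : α × β → R :=
  fun q => x q.1 * y q.2

lemma star_antidiagVec {R : Type*} [Semiring R] [StarRing R] (m n s : ℕ) :
    star (antidiagVec R m n s) = antidiagVec R m n s := by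
  ext q
  simp only [antidiagVec, Pi.star_apply, apply_ite star, star_one, star_zero]

lemma antidiagVec_dotProduct_of_mem_entSub {m n : ℕ} {w : Fin m × Fin n → ℂ}
    (hw : w ∈ entSub m n) (s : ℕ) : antidiagVec ℂ m n s ⬝ᵥ w = 0 := by
  induction hw using Submodule.span_induction with
  | mem x hx =>
    obtain ⟨j, k, hj, hk, rfl⟩ := hx
    simp [dotProduct_sub, dotProduct_single, antidiagVec,
      show j + (k + 1) = j + 1 + k by omega]
  | zero => exact dotProduct_zero _
  | add x y _ _ hx hy => rw [dotProduct_add, hx, hy, add_zero]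
  | smul c x _ hx => rw [dotProduct_smul, hx, smul_zero]

lemma outer_kronecker_outer {α β : Type*} (x : α → ℂ) (y : β → ℂ) :
    outer x ⊗ₖ outer y = outer (kronVec x y) := by
  ext q r
  simp only [kroneckerMap_apply, outer, kronVec, map_mul]
  ring

lemma dotProduct_outer_mulVec {d : Type*} [Fintype d] (z u : d → ℂ) (hu : star u = u) :
    u ⬝ᵥ outer z *ᵥ u = normSq (u ⬝ᵥ z) := by
  have hstar : star z ⬝ᵥ u = star (u ⬝ᵥ z) := by
    rw [star_dotProduct, hu, dotProduct_comm]
  rw [show outer z = vecMulVec z (star z) from rfl, vecMulVec_mulVec, hstar, op_smul_eq_smul, dotProduct_smul, smul_eq_mul, mul_comm]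
  exact mul_conj _

lemma eq_zero_or_dotProduct_eq_zero_of_dotProduct_mulVec_eq_zero {ι d : Type*} [Fintype ι]
    [Fintype d] {p : ι → ℝ} (hp : ∀ i, 0 ≤ p i) (z : ι → d → ℂ) {u : d → ℂ} (hu : star u = u)
    (h : u ⬝ᵥ (∑ i, (p i : ℂ) • outer (z i)) *ᵥ u = 0) (i : ι) :
    p i = 0 ∨ u ⬝ᵥ z i = 0 := by
  have hsum : ∑ j, p j * normSq (u ⬝ᵥ z j) = 0 := by
    rw [sum_mulVec, dotProduct_sum] at h
    simp only [smul_mulVec, dotProduct_smul, dotProduct_outer_mulVec _ _ hu, smul_eq_mul] at h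
    exact_mod_cast h
  have hi := (sum_eq_zero_iff_of_nonneg fun j _ => mul_nonneg (hp j) (normSq_nonneg _)).mp
    hsum i (mem_univ i)
  simpa using hi

open Polynomial in
lemma coeff_ofFn_mul_ofFn {R : Type*} [CommSemiring R] [DecidableEq R] {m n : ℕ}
    (x : Fin m → R) (y : Fin n → R) (s : ℕ) :
    (ofFn m x * ofFn n y).coeff s = antidiagVec R m n s ⬝ᵥ kronVec x y := by
  rw [ofFn_eq_sum_monomial, ofFn_eq_sum_monomial, sum_mul_sum, finsetSum_coeff,
    dotProduct, Fintype.sum_prod_type]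
  refine sum_congr rfl fun a _ => ?_
  rw [finsetSum_coeff]
  refine sum_congr rfl fun b _ => ?_
  simp [monomial_mul_monomial, coeff_monomial, antidiagVec, kronVec]

open Polynomial in
lemma eq_zero_or_eq_zero_of_antidiagVec_dotProduct_kronVec {R : Type*} [CommRing R] [IsDomain R]
    {m n : ℕ} {x : Fin m → R} {y : Fin n → R}
    (h : ∀ s, antidiagVec R m n s ⬝ᵥ kronVec x y = 0) : x = 0 ∨ y = 0 := by
  classical
  have hmul : ofFn m x * ofFn n y = 0 := by
    ext s
    rw [coeff_ofFn_mul_ofFn, h, coeff_zero]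
  rcases mul_eq_zero.mp hmul with hx | hy
  · exact .inl (injective_ofFn m (hx.trans (ofFn_zero m).symm))
  · exact .inr (injective_ofFn n (hy.trans (ofFn_zero n).symm))

theorem stmt_9_general (m n : ℕ)
    (ρ : Matrix (Fin m × Fin n) (Fin m × Fin n) ℂ)
    (hrange : ∀ v, ρ *ᵥ v ∈ entSub m n) :
    ¬ Separable ρ := by
  rintro ⟨K, p, x, y, hp0, hp1, hxn, hyn, rfl⟩
  obtain ⟨i, hi⟩ : ∃ i, p i ≠ 0 := by
    by_contra! h
    simp [h] at hp1
  simp only [outer_kronecker_outer] at hrange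
  have horth : ∀ s, antidiagVec ℂ m n s ⬝ᵥ kronVec (x i) (y i) = 0 := fun s =>
    (eq_zero_or_dotProduct_eq_zero_of_dotProduct_mulVec_eq_zero hp0 _ (star_antidiagVec m n s)
      (antidiagVec_dotProduct_of_mem_entSub (hrange _) s) i).resolve_left hi
  rcases eq_zero_or_eq_zero_of_antidiagVec_dotProduct_kronVec horth with hx | hy
  · simpa [hx] using hxn i
  · simpa [hy] using hyn i

theorem stmt_9 (m n : ℕ) (hm : 2 ≤ m) (hn : 2 ≤ n)
    (ρ : Matrix (Fin m × Fin n) (Fin m × Fin n) ℂ)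
    (hρ : ρ.PosSemidef) (htr : ρ.trace = 1)
    (hrange : ∀ v, ρ *ᵥ v ∈ entSub m n) :
    ¬ Separable ρ :=
  stmt_9_general m n ρ hrange
end

section
/- If ρ ∈ M_m(ℂ) ⊗ M_n(ℂ) is separable, then ρ^Γ is positive semidefinite (the Peres PPT criterion). -/
/-! Partial transposition is linear and maps `σ ⊗ₖ τ` to `σ ⊗ₖ τᵀ`, so
`ρ^Γ = ∑ pᵢ • (σᵢ ⊗ₖ τᵢᵀ)`. Transposition preserves positive semidefiniteness, hence `ρ^Γ` is a
nonnegative combination of Kronecker products of positive semidefinite matrices. -/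

open Matrix Complex Finset Kronecker
open scoped ComplexOrder

section ptranspose

variable {m n : ℕ}

theorem ptranspose_kronecker (A : Matrix (Fin m) (Fin m) ℂ) (B : Matrix (Fin n) (Fin n) ℂ) :
    ptranspose (A ⊗ₖ B) = A ⊗ₖ Bᵀ :=
  rfl

theorem ptranspose_smul (c : ℂ) (ρ : Matrix (Fin m × Fin n) (Fin m × Fin n) ℂ) :
    ptranspose (c • ρ) = c • ptranspose ρ :=
  rfl

theorem ptranspose_sum {ι : Type*} (s : Finset ι)
    (ρ : ι → Matrix (Fin m × Fin n) (Fin m × Fin n) ℂ) :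
    ptranspose (∑ i ∈ s, ρ i) = ∑ i ∈ s, ptranspose (ρ i) := by
  ext a b
  simp only [ptranspose, Matrix.sum_apply]

theorem Matrix.PosSemidef.ptranspose_kronecker {A : Matrix (Fin m) (Fin m) ℂ}
    {B : Matrix (Fin n) (Fin n) ℂ} (hA : A.PosSemidef) (hB : B.PosSemidef) :
    (ptranspose (A ⊗ₖ B)).PosSemidef := by
  rw [_root_.ptranspose_kronecker]
  exact hA.kronecker hB.transpose

end ptranspose

theorem stmt_10_general (m n : ℕ) {ι : Type*} [Fintype ι]
    (p : ι → ℝ) (σ : ι → Matrix (Fin m) (Fin m) ℂ) (τ : ι → Matrix (Fin n) (Fin n) ℂ)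
    (hp : ∀ i, 0 ≤ p i)
    (hσ : ∀ i, (σ i).PosSemidef)
    (hτ : ∀ i, (τ i).PosSemidef)
    (ρ : Matrix (Fin m × Fin n) (Fin m × Fin n) ℂ)
    (hρ : ρ = ∑ i, (p i : ℂ) • (σ i ⊗ₖ τ i)) :
    (ptranspose ρ).PosSemidef := by
  rw [hρ, ptranspose_sum]
  refine posSemidef_sum _ fun i _ => ?_
  rw [ptranspose_smul]
  exact ((hσ i).ptranspose_kronecker (hτ i)).smul (Complex.zero_le_real.mpr (hp i))

theorem stmt_10 (m n : ℕ) {ι : Type*} [Fintype ι]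
    (p : ι → ℝ) (σ : ι → Matrix (Fin m) (Fin m) ℂ) (τ : ι → Matrix (Fin n) (Fin n) ℂ)
    (hp : ∀ i, 0 ≤ p i) (hp1 : ∑ i, p i = 1)
    (hσ : ∀ i, (σ i).PosSemidef) (hσtr : ∀ i, (σ i).trace = 1)
    (hτ : ∀ i, (τ i).PosSemidef) (hτtr : ∀ i, (τ i).trace = 1)
    (ρ : Matrix (Fin m × Fin n) (Fin m × Fin n) ℂ)
    (hρ : ρ = ∑ i, (p i : ℂ) • (σ i ⊗ₖ τ i)) :
    (ptranspose ρ).PosSemidef :=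
  stmt_10_general m n p σ τ hp hσ hτ ρ hρ
end

section
/- Let P be the orthogonal projection onto a subspace S ⊆ ℂ^m ⊗ ℂ^n such that no PPT state has range contained in S. Then there exists a constant c < 1 such that Tr(Pσ) ≤ c for all PPT states σ. -/
open Matrix Complex Finset
open scoped ComplexOrder

/-!
The PPT states form a compact set: it is closed, and every entry of a density matrix is bounded
by its trace (2×2 principal minors). Hence the continuous function `σ ↦ Re Tr(Pσ)` attains its
maximum on it. Writing a state as `σ = Cᴴ C`, one has `Tr((1 - P)σ) = Tr((C(1 - P))(C(1 - P))ᴴ) ≥ 0`,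
so `Re Tr(Pσ) ≤ 1`, with equality only when `C(1 - P) = 0`, i.e. `Pσ = σ`, i.e. the range of `σ`
lies in `S`. This is excluded, so the maximum is `< 1`.
-/

theorem IsCompact.exists_lt_forall_le_of_forall_lt {α β : Type*} [LinearOrder α]
    [TopologicalSpace α] [ClosedIciTopology α] [NoMinOrder α] [TopologicalSpace β]
    {K : Set β} {f : β → α} {a : α} (hK : IsCompact K) (hf : ContinuousOn f K)
    (h : ∀ x ∈ K, f x < a) : ∃ c < a, ∀ x ∈ K, f x ≤ c := by
  rcases K.eq_empty_or_nonempty with rfl | hne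
  · obtain ⟨c, hc⟩ := exists_lt a
    exact ⟨c, hc, by simp⟩
  · obtain ⟨x, hx, hmax⟩ := hK.exists_isMaxOn hne hf
    exact ⟨f x, h x hx, fun y hy => hmax hy⟩

namespace Matrix

variable {ι : Type*}

theorem PosSemidef.normSq_apply_le {A : Matrix ι ι ℂ} (hA : A.PosSemidef) (i j : ι) :
    normSq (A i j) ≤ (A i i).re * (A j j).re := by
  have hdet := (hA.submatrix ![i, j]).det_nonneg
  simp only [det_fin_two, submatrix_apply, cons_val_zero, cons_val_one] at hdet
  rw [← hA.1.apply j i, star_def, mul_conj] at hdet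
  have hi := nonneg_iff.1 (hA.diag_nonneg (i := i))
  have hj := nonneg_iff.1 (hA.diag_nonneg (i := j))
  simpa only [zero_re, sub_re, mul_re, ← hi.2, ← hj.2, mul_zero, sub_zero, ofReal_re,
    sub_nonneg] using (le_def.1 hdet).1

variable [Fintype ι]

theorem isClosed_setOf_posSemidef : IsClosed {A : Matrix ι ι ℂ | A.PosSemidef} := by
  have : {A : Matrix ι ι ℂ | A.PosSemidef} =
      {A | Aᴴ = A} ∩ ⋂ x : ι → ℂ, {A | 0 ≤ star x ⬝ᵥ A *ᵥ x} := by
    ext A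
    simp only [Set.mem_ofPred_eq, Set.mem_inter_iff, Set.mem_iInter,
      posSemidef_iff_dotProduct_mulVec]
    rfl
  rw [this]
  exact (isClosed_eq continuous_id.matrix_conjTranspose continuous_id).inter <|
    isClosed_iInter fun x => isClosed_Ici.preimage <|
      continuous_const.dotProduct (continuous_id.matrix_mulVec continuous_const)

namespace PosSemidef

variable {A : Matrix ι ι ℂ}

theorem re_apply_self_le_re_trace (hA : A.PosSemidef) (i : ι) : (A i i).re ≤ A.trace.re := by
  rw [trace, re_sum]
  exact single_le_sum (f := fun j => (A j j).re)
    (fun j _ => (nonneg_iff.1 hA.diag_nonneg).1) (mem_univ i)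

theorem norm_apply_le_re_trace (hA : A.PosSemidef) (i j : ι) : ‖A i j‖ ≤ A.trace.re := by
  have hi := hA.re_apply_self_le_re_trace i
  have hj := hA.re_apply_self_le_re_trace j
  have hi0 := (nonneg_iff.1 (hA.diag_nonneg (i := i))).1
  have hj0 := (nonneg_iff.1 (hA.diag_nonneg (i := j))).1
  refine abs_le_of_sq_le_sq' ?_ (hi0.trans hi) |>.2
  rw [Complex.sq_norm]
  calc normSq (A i j) ≤ (A i i).re * (A j j).re := hA.normSq_apply_le i j
    _ ≤ A.trace.re ^ 2 := by rw [sq]; exact mul_le_mul hi hj hj0 (hi0.trans hi)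

open scoped MatrixOrder in
theorem exists_eq_conjTranspose_mul_self [DecidableEq ι] (hA : A.PosSemidef) :
    ∃ C : Matrix ι ι ℂ, A = Cᴴ * C :=
  CStarAlgebra.nonneg_iff_eq_star_mul_self.mp hA.nonneg

end PosSemidef

section Projection

variable {Q A : Matrix ι ι ℂ} (hQ : Q.IsHermitian) (hQQ : IsIdempotentElem Q)
include hQ hQQ

theorem trace_mul_conjTranspose_mul_self_eq (C : Matrix ι ι ℂ) :
    (Q * (Cᴴ * C)).trace = (C * Q * (C * Q)ᴴ).trace := by
  have hCQ : C * Q * (C * Q)ᴴ = C * Q * Cᴴ := by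
    rw [conjTranspose_mul, hQ.eq, ← Matrix.mul_assoc, Matrix.mul_assoc C, hQQ.eq]
  rw [hCQ, trace_mul_cycle, trace_mul_comm]

theorem PosSemidef.trace_mul_nonneg_of_isIdempotentElem (hA : A.PosSemidef) :
    0 ≤ (Q * A).trace := by
  classical
  obtain ⟨C, rfl⟩ := hA.exists_eq_conjTranspose_mul_self
  rw [trace_mul_conjTranspose_mul_self_eq hQ hQQ]
  exact (posSemidef_self_mul_conjTranspose _).trace_nonneg

theorem PosSemidef.mul_eq_zero_of_trace_mul_eq_zero (hA : A.PosSemidef)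
    (h : (Q * A).trace = 0) : Q * A = 0 := by
  classical
  obtain ⟨C, rfl⟩ := hA.exists_eq_conjTranspose_mul_self
  rw [trace_mul_conjTranspose_mul_self_eq hQ hQQ, trace_mul_conjTranspose_self_eq_zero_iff] at h
  rw [← Matrix.mul_assoc, ← hQ.eq, ← conjTranspose_mul, h, conjTranspose_zero, Matrix.zero_mul]

theorem PosSemidef.mul_eq_self_of_re_trace_le [DecidableEq ι] (hA : A.PosSemidef)
    (h : A.trace.re ≤ (Q * A).trace.re) : Q * A = A := by
  have hQ' : (1 - Q).IsHermitian := isHermitian_one.sub hQ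
  have hQQ' : IsIdempotentElem (1 - Q) := hQQ.one_sub
  have htrace : ((1 - Q) * A).trace = A.trace - (Q * A).trace := by
    rw [Matrix.sub_mul, Matrix.one_mul, trace_sub]
  have hnonneg := nonneg_iff.1 (hA.trace_mul_nonneg_of_isIdempotentElem hQ' hQQ')
  have hzero : ((1 - Q) * A).trace = 0 := by
    refine Complex.ext (le_antisymm ?_ hnonneg.1) hnonneg.2.symm
    rw [htrace, sub_re, zero_re]
    exact sub_nonpos.2 h
  have := hA.mul_eq_zero_of_trace_mul_eq_zero hQ' hQQ' hzero
  rwa [Matrix.sub_mul, Matrix.one_mul, sub_eq_zero, eq_comm] at this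

end Projection

end Matrix

def densityMatrices (ι : Type*) [Fintype ι] : Set (Matrix ι ι ℂ) :=
  {σ | σ.PosSemidef ∧ σ.trace = 1}

theorem isCompact_densityMatrices (ι : Type*) [Fintype ι] : IsCompact (densityMatrices ι) := by
  have hbox : densityMatrices ι ⊆ Set.univ.pi fun _ => Set.univ.pi fun _ => Metric.closedBall 0 1 :=
    fun σ ⟨hσ, htr⟩ i _ j _ => by
      simpa [htr] using hσ.norm_apply_le_re_trace i j
  refine (isCompact_univ_pi fun _ => isCompact_univ_pi fun _ => isCompact_closedBall 0 1)
    |>.of_isClosed_subset ?_ hbox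
  exact isClosed_setOf_posSemidef.inter (isClosed_eq continuous_id.matrix_trace continuous_const)

def pptStates (m n : ℕ) : Set (Matrix (Fin m × Fin n) (Fin m × Fin n) ℂ) :=
  {σ ∈ densityMatrices _ | (ptranspose σ).PosSemidef}

theorem continuous_ptranspose (m n : ℕ) : Continuous (ptranspose (m := m) (n := n)) :=
  continuous_matrix fun _ _ => (continuous_apply _).comp (continuous_apply _)

theorem isCompact_pptStates (m n : ℕ) : IsCompact (pptStates m n) :=
  (isCompact_densityMatrices _).inter_right <|
    isClosed_setOf_posSemidef.preimage (continuous_ptranspose m n)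

theorem stmt_15_general (m n : ℕ) (S : Submodule ℂ (Fin m × Fin n → ℂ))
    (P : Matrix (Fin m × Fin n) (Fin m × Fin n) ℂ)
    -- `P` is the orthogonal projection onto `S`:
    (hP : P.IsHermitian) (hP2 : P * P = P)
    (hPrange : ∀ v, P *ᵥ v ∈ S)
    -- no PPT state has range contained in `S`:
    (hS : ∀ σ : Matrix (Fin m × Fin n) (Fin m × Fin n) ℂ,
      σ.PosSemidef → σ.trace = 1 → (ptranspose σ).PosSemidef →
      ¬ (∀ v, σ *ᵥ v ∈ S)) :
    ∃ c : ℝ, c < 1 ∧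
      ∀ σ : Matrix (Fin m × Fin n) (Fin m × Fin n) ℂ,
        σ.PosSemidef → σ.trace = 1 → (ptranspose σ).PosSemidef →
        ((P * σ).trace).re ≤ c := by
  have hlt : ∀ σ ∈ pptStates m n, ((P * σ).trace).re < 1 := by
    rintro σ ⟨⟨hσ, htr⟩, hpt⟩
    by_contra! hge
    have hPσ : P * σ = σ := hσ.mul_eq_self_of_re_trace_le hP hP2 (by simpa [htr] using hge)
    exact hS σ hσ htr hpt fun v => by
      rw [← hPσ, ← mulVec_mulVec]
      exact hPrange _
  have hcont : Continuous fun σ : Matrix (Fin m × Fin n) (Fin m × Fin n) ℂ => ((P * σ).trace).re :=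
    continuous_re.comp (continuous_const.matrix_mul continuous_id).matrix_trace
  obtain ⟨c, hc, hle⟩ :=
    (isCompact_pptStates m n).exists_lt_forall_le_of_forall_lt hcont.continuousOn hlt
  exact ⟨c, hc, fun σ hσ htr hpt => hle σ ⟨⟨hσ, htr⟩, hpt⟩⟩

theorem stmt_15 (m n : ℕ) (S : Submodule ℂ (Fin m × Fin n → ℂ))
    (P : Matrix (Fin m × Fin n) (Fin m × Fin n) ℂ)
    -- `P` is the orthogonal projection onto `S`:
    (hP : P.IsHermitian) (hP2 : P * P = P)
    (hPrange : ∀ v, P *ᵥ v ∈ S) (hPfix : ∀ v ∈ S, P *ᵥ v = v)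
    -- no PPT state has range contained in `S`:
    (hS : ∀ σ : Matrix (Fin m × Fin n) (Fin m × Fin n) ℂ,
      σ.PosSemidef → σ.trace = 1 → (ptranspose σ).PosSemidef →
      ¬ (∀ v, σ *ᵥ v ∈ S)) :
    ∃ c : ℝ, c < 1 ∧
      ∀ σ : Matrix (Fin m × Fin n) (Fin m × Fin n) ℂ,
        σ.PosSemidef → σ.trace = 1 → (ptranspose σ).PosSemidef →
        ((P * σ).trace).re ≤ c :=
  stmt_15_general m n S P hP hP2 hPrange hS
end
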